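/- Hitting lemma: let C : {0,1}^n → {0,1}^m be a (q,δ,ε) insdel LDC with a non-adaptive decoder Dec, and let C'(x) ∈ {0,1}^{2m} denote the augmented codeword obtained by appending m padding bits to C(x) (the padding bits may be random, with randomness independent of x). Let 𝒟 be any distribution over deletion sets D ⊆ [2m] such that every D in the support of 𝒟 satisfies |D ∩ [m]| ≤ δm and |D| ≤ m. Then for every i ∈ [n], the probability over D ∼ 𝒟 and over the query Q of Dec(·, m, i) that Q^D ∈ Good_i is at least 3ε/2. -/

import Mathlib

open scoped ENNReal Classical

/-- Cost structure for edit distance (formerly in Mathlib, `Mathlib.Data.List.EditDistance.Defs`). -/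
structure Levenshtein.Cost (α β δ : Type) where
  delete : α → δ
  insert : β → δ
  substitute : α → β → δ

/-- (Implementation detail for `levenshtein`, formerly in Mathlib.) -/
def Levenshtein.impl {α β δ : Type} [AddZeroClass δ] [Min δ]
    (C : Levenshtein.Cost α β δ)
    (xs : List α) (y : β) (d : {r : List δ // 0 < r.length}) : {r : List δ // 0 < r.length} :=
  let ⟨ds, w⟩ := d
  xs.zip (ds.zip ds.tail) |>.foldr
    (init := ⟨[C.insert y + ds.getLast (List.length_pos_iff_ne_nil.mp w)], by simp⟩)
    (fun ⟨x, d₀, d₁⟩ ⟨r, w⟩ =>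
      ⟨min (C.delete x + r[0]) (min (C.insert y + d₀) (C.substitute x y + d₁)) :: r, by simp⟩)

/-- `suffixLevenshtein C xs ys` computes the Levenshtein distance
(using the cost functions provided by `C`) between each suffix of `xs` and `ys`
(formerly in Mathlib). -/
def suffixLevenshtein {α β δ : Type} [AddZeroClass δ] [Min δ]
    (C : Levenshtein.Cost α β δ) (xs : List α) (ys : List β) :
    {r : List δ // 0 < r.length} :=
  ys.foldr
    (Levenshtein.impl C xs)
    (xs.foldr (init := ⟨[0], by simp⟩) (fun a ⟨ds, w⟩ => ⟨(C.delete a + ds[0]) :: ds, by simp⟩))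

/-- The Levenshtein distance with cost functions `C` (formerly in Mathlib). -/
def levenshtein {α β δ : Type} [AddZeroClass δ] [Min δ]
    (C : Levenshtein.Cost α β δ) (xs : List α) (ys : List β) : δ :=
  let ⟨r, w⟩ := suffixLevenshtein C xs ys
  r[0]

/-- Cost structure for insertion/deletion edit distance: a substitution costs `2`
(one deletion plus one insertion). -/
def insdelCost {α : Type} [DecidableEq α] : Levenshtein.Cost α α ℕ where
  delete _ := 1
  insert _ := 1
  substitute a b := if a = b then 0 else 2

/-- `ED u v` is the minimum number of insertions and deletions of single symbols
needed to transform `u` into `v`. -/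
def ED {α : Type} [DecidableEq α] (u v : List α) : ℕ := levenshtein insdelCost u v

/-- The probability that a non-adaptive `q`-query decoder, run on received word `y`
with target index `i`, outputs the symbol `b`.  A (randomized) non-adaptive decoder is,
for each received length `m'` and each target index `i`, a probability distribution over
pairs `(S, f)` where `S` is a `q`-tuple of positions and `f` maps the queried symbols to
an output; the decoder outputs `f (y_S)` (out-of-range positions read a default symbol). -/
noncomputable def naSuccessProb {β α : Type} [Inhabited α] {q n : ℕ}
    (Dec : ℕ → Fin n → PMF ((Fin q → ℕ) × ((Fin q → α) → β)))
    (y : List α) (i : Fin n) (b : β) : ℝ≥0∞ :=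
  (Dec y.length i).toOuterMeasure {p | p.2 (fun j => y.getD (p.1 j) default) = b}

/-- `C : β^n → α^m` is a `(q, δ, ε)` insdel LDC with a non-adaptive decoder:
some non-adaptive `q`-query decoder recovers each message symbol `x i` with probability
at least `1/2 + ε` from any received word `y` with `ED (C x) y ≤ δ · 2m`. -/
def IsInsdelLDC {β α : Type} [DecidableEq α] [Inhabited α] (q : ℕ) (δ ε : ℝ)
    {n m : ℕ} (C : (Fin n → β) → Fin m → α) : Prop :=
  ∃ Dec : ℕ → Fin n → PMF ((Fin q → ℕ) × ((Fin q → α) → β)),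
    ∀ (x : Fin n → β) (y : List α),
      (ED (List.ofFn (C x)) y : ℝ) ≤ δ * (2 * m) →
      ∀ i : Fin n, ENNReal.ofReal (1 / 2 + ε) ≤ naSuccessProb Dec y i (x i)

/-- `phiD D i` is the original (0-indexed) position of the `(i+1)`-st surviving symbol
after deleting the positions in `D`: the least `i'` such that among positions
`0, …, i'` at least `i+1` survive. -/
noncomputable def phiD (D : Finset ℕ) (i : ℕ) : ℕ :=
  sInf {i' : ℕ | i + 1 ≤ ((Finset.range (i' + 1)).filter fun j => j ∉ D).card}

/-- A `q`-tuple `S` of (0-indexed) positions of the augmented codeword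
`C'(x) = C(x) ++ pad ∈ {0,1}^(2m)` (with padding distributed as `P`, independent of the
uniform message `x`) is *good* for index `i` if some Boolean function `f` of the
queried bits predicts `x i` with probability at least `1/2 + ε/4`. -/
def GoodTup {n m q : ℕ} (C : (Fin n → Bool) → Fin m → Bool)
    (P : PMF (Fin m → Bool)) (ε : ℝ) (i : Fin n) (S : Fin q → ℕ) : Prop :=
  ∃ f : (Fin q → Bool) → Bool,
    ENNReal.ofReal (1 / 2 + ε / 4) ≤
      (((PMF.uniformOfFintype (Fin n → Bool)).bind fun x =>
          P.map fun pad => (x, pad))).toOuterMeasure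
        {t | f (fun j => (List.ofFn (C t.1) ++ List.ofFn t.2).getD (S j) false) = t.1 i}


/-!
Fix a deletion set `D` and let `c = |D ∩ [m]| ≤ δm`. Reading the augmented codeword `C'(x)`
through `φ_D` gives a word `y` of length `m` whose first `m - c` symbols form a subsequence of
`C(x)` (since `φ_D` is increasing and `φ_D(k) < m` for `k < m - c`), so `ED(C(x), y) ≤ 2c ≤ 2δm`.
Running the decoder on `y` means reading `C'(x)` at `Q^D`, so for every message and padding the
prediction `f(C'(x)_{Q^D})` is correct with probability `≥ 1/2 + ε`. Averaging over the message
and padding, a query `Q` with `Q^D` not good contributes at most `1/2 + ε/4`; hence the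
probability `g` of a good `Q^D` satisfies `1/2 + ε ≤ g + (1/2 + ε/4)(1 - g)`, i.e.
`g ≥ 3ε/(2 - ε) ≥ 3ε/2`.
-/

namespace Levenshtein

variable {α β δ : Type} [AddZeroClass δ] [Min δ] (C : Cost α β δ)

theorem impl_length (xs : List α) (y : β) (d : {r : List δ // 0 < r.length})
    (w : d.1.length = xs.length + 1) : (impl C xs y d).1.length = xs.length + 1 := by
  induction xs generalizing d with
  | nil => rfl
  | cons _ xs ih =>
    match d, w with
    | ⟨_ :: d₂ :: ds, _⟩, w =>
      exact congrArg (· + 1) (ih ⟨d₂ :: ds, by simp⟩ (by simpa using w))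

theorem impl_cons_head (x : α) (xs : List α) (y : β) (d : δ) (ds : List δ)
    (w : 0 < (d :: ds).length) (w' : 0 < ds.length) (h) :
    (impl C (x :: xs) y ⟨d :: ds, w⟩).1[0]'h =
      min (C.delete x + (impl C xs y ⟨ds, w'⟩).1[0]'(impl C xs y ⟨ds, w'⟩).2)
        (min (C.insert y + d) (C.substitute x y + ds[0])) :=
  match ds, w' with | _ :: _, _ => rfl

theorem impl_cons_tail (x : α) (xs : List α) (y : β) (d : δ) (ds : List δ)
    (w : 0 < (d :: ds).length) (w' : 0 < ds.length) :
    (impl C (x :: xs) y ⟨d :: ds, w⟩).1.tail = (impl C xs y ⟨ds, w'⟩).1 :=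
  match ds, w' with | _ :: _, _ => rfl

end Levenshtein

open Levenshtein

section

variable {α β δ : Type} [AddZeroClass δ] [Min δ] (C : Cost α β δ)

theorem suffixLevenshtein_length (xs : List α) (ys : List β) :
    (suffixLevenshtein C xs ys).1.length = xs.length + 1 := by
  induction ys with
  | nil => induction xs <;> simp_all [suffixLevenshtein]
  | cons y ys ih => exact impl_length C xs y _ ih

theorem suffixLevenshtein_cons₁_tail (x : α) (xs : List α) (ys : List β) :
    (suffixLevenshtein C (x :: xs) ys).1.tail = (suffixLevenshtein C xs ys).1 := by
  induction ys with
  | nil => rfl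
  | cons y ys ih =>
    change (impl C (x :: xs) y (suffixLevenshtein C (x :: xs) ys)).1.tail =
      (impl C xs y (suffixLevenshtein C xs ys)).1
    match suffixLevenshtein C (x :: xs) ys, suffixLevenshtein C xs ys, ih with
    | ⟨d :: ds, w⟩, ⟨_, w'⟩, rfl => exact impl_cons_tail C x xs y d ds w w'

theorem suffixLevenshtein_cons₁ (x : α) (xs : List α) (ys : List β) :
    suffixLevenshtein C (x :: xs) ys =
      ⟨levenshtein C (x :: xs) ys :: (suffixLevenshtein C xs ys).1, by simp⟩ := by
  apply Subtype.ext
  have htail := suffixLevenshtein_cons₁_tail C x xs ys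
  change _ = (suffixLevenshtein C (x :: xs) ys).1[0]'(suffixLevenshtein C (x :: xs) ys).2 :: _
  generalize suffixLevenshtein C (x :: xs) ys = r at htail ⊢
  match r, htail with | ⟨_ :: _, _⟩, rfl => rfl

theorem levenshtein_nil_nil : levenshtein C ([] : List α) ([] : List β) = 0 := rfl

theorem levenshtein_nil_cons (y : β) (ys : List β) :
    levenshtein C ([] : List α) (y :: ys) = C.insert y + levenshtein C [] ys := by
  show C.insert y + (suffixLevenshtein C [] ys).1.getLast _ =
    C.insert y + (suffixLevenshtein C [] ys).1[0]'(suffixLevenshtein C [] ys).2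
  have hl := suffixLevenshtein_length C ([] : List α) ys
  have getLast_eq_head : ∀ (r : List δ) (h₁ : r ≠ []) (h₂ : 0 < r.length), r.length = 1 →
      r.getLast h₁ = r[0]'h₂ := by
    rintro r - - h
    obtain ⟨a, rfl⟩ := List.length_eq_one_iff.1 h
    rfl
  exact congrArg _ (getLast_eq_head _ _ _ (by simpa using hl))

theorem levenshtein_cons_nil (x : α) (xs : List α) :
    levenshtein C (x :: xs) ([] : List β) = C.delete x + levenshtein C xs [] :=
  rfl

theorem levenshtein_cons_cons (x : α) (xs : List α) (y : β) (ys : List β) :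
    levenshtein C (x :: xs) (y :: ys) =
      min (C.delete x + levenshtein C xs (y :: ys))
        (min (C.insert y + levenshtein C (x :: xs) ys)
          (C.substitute x y + levenshtein C xs ys)) := by
  change (impl C (x :: xs) y (suffixLevenshtein C (x :: xs) ys)).1[0]'(by
    rw [impl_length] <;> simp [suffixLevenshtein_length]) = _
  simp only [suffixLevenshtein_cons₁]
  rw [impl_cons_head]
  rfl

end

section EditDistance

variable {α : Type} [DecidableEq α]

theorem ED_nil_left (v : List α) : ED [] v = v.length := by
  induction v with
  | nil => exact levenshtein_nil_nil _
  | cons b v ih =>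
    rw [ED, levenshtein_nil_cons, ← ED, ih, List.length_cons]
    exact Nat.add_comm _ _

theorem ED_cons_left_le (a : α) (u v : List α) : ED (a :: u) v ≤ ED u v + 1 := by
  cases v with
  | nil => simp [ED, levenshtein_cons_nil, insdelCost, Nat.add_comm]
  | cons b v =>
    rw [ED, levenshtein_cons_cons]
    exact (min_le_left _ _).trans (Nat.add_comm _ _).le

theorem ED_cons_cons_le (a : α) (u v : List α) : ED (a :: u) (a :: v) ≤ ED u v := by
  rw [ED, levenshtein_cons_cons]
  refine (min_le_right _ _).trans ((min_le_right _ _).trans ?_)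
  simp [insdelCost, ED]

theorem ED_append_le_of_sublist {u v : List α} (h : v.Sublist u) (s : List α) :
    ED u (v ++ s) ≤ u.length - v.length + s.length := by
  induction h with
  | slnil => simpa using (ED_nil_left s).le
  | @cons v u a h ih =>
    have := ED_cons_left_le a u (v ++ s)
    have := h.length_le
    simp only [List.length_cons]
    omega
  | @cons_cons v u a h ih =>
    have := ED_cons_cons_le a u (v ++ s)
    simp only [List.cons_append, List.length_cons] at *
    omega

end EditDistance

section Deletion

theorem phiD_eq_nth (D : Finset ℕ) : phiD D = Nat.nth (· ∉ D) := by
  have hinf : (Set.ofPred (· ∉ D)).Infinite := D.finite_toSet.infinite_compl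
  funext k
  have hset : {i' : ℕ | k + 1 ≤ ((Finset.range (i' + 1)).filter fun j => j ∉ D).card} =
      Set.Ici (Nat.nth (· ∉ D) k) := by
    ext i'
    rw [Set.mem_ofPred_eq, ← Nat.count_eq_card_filter_range, Set.mem_Ici, Nat.add_one_le_iff,
      ← not_le, Nat.count_le_iff_le_nth hinf, not_le, Nat.lt_add_one_iff]
  rw [phiD, hset, csInf_Ici]

theorem phiD_strictMono (D : Finset ℕ) : StrictMono (phiD D) := by
  rw [phiD_eq_nth]
  exact Nat.nth_strictMono D.finite_toSet.infinite_compl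

theorem phiD_lt_of_lt_sub_card {D : Finset ℕ} {m k : ℕ}
    (hk : k < m - (D.filter fun j => j < m).card) : phiD D k < m := by
  rw [phiD_eq_nth]
  refine Nat.nth_lt_of_lt_count (hk.trans_le ?_)
  have hsplit := Finset.card_filter_add_card_filter_not (s := Finset.range m) (p := (· ∉ D))
  have hmem : (Finset.range m).filter (fun j => ¬ j ∉ D) = D.filter fun j => j < m := by
    ext j
    simp [and_comm]
  rw [Finset.card_range, hmem] at hsplit
  rw [Nat.count_eq_card_filter_range]
  omega

end Deletion

section ReceivedWord

variable {α : Type} [Inhabited α]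

/-- The first `m` symbols of `L` that survive deleting the positions in `D`
(padded with `default` once `L` runs out). -/
noncomputable def receivedWord (D : Finset ℕ) (m : ℕ) (L : List α) : List α :=
  (List.range m).map fun k => L.getD (phiD D k) default

@[simp]
theorem length_receivedWord (D : Finset ℕ) (m : ℕ) (L : List α) :
    (receivedWord D m L).length = m := by
  simp [receivedWord]

theorem getD_receivedWord (D : Finset ℕ) (L : List α) {m k : ℕ} (hk : k < m) :
    (receivedWord D m L).getD k default = L.getD (phiD D k) default := by
  simp [receivedWord, hk]

theorem map_getD_range_length (u : List α) : (List.range u.length).map (u.getD · default) = u := by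
  refine List.ext_getElem (by simp) fun k h₁ h₂ => ?_
  simp [List.getElem?_eq_getElem h₂]

theorem ED_receivedWord_append_le [DecidableEq α] (D : Finset ℕ) (u v : List α) :
    ED u (receivedWord D u.length (u ++ v)) ≤ 2 * (D.filter fun j => j < u.length).card := by
  set m := u.length
  set c := (D.filter fun j => j < m).card
  set y := receivedWord D m (u ++ v)
  have hprefix : y.take (m - c) = ((List.range (m - c)).map (phiD D)).map (u.getD · default) := by
    simp only [y, receivedWord, ← List.map_take, List.take_range, List.map_map]
    rw [min_eq_left (Nat.sub_le m c)]
    refine List.map_congr_left fun k hk => List.getD_append _ _ _ _ ?_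
    exact phiD_lt_of_lt_sub_card (List.mem_range.1 hk)
  have hsub : (y.take (m - c)).Sublist u := by
    have hlt : ((List.range (m - c)).map (phiD D)).Pairwise (· < ·) :=
      List.pairwise_map.2 (List.pairwise_lt_range.imp fun h => phiD_strictMono D h)
    have hsubset : (List.range (m - c)).map (phiD D) ⊆ List.range m := by
      intro j hj
      obtain ⟨k, hk, rfl⟩ := List.mem_map.1 hj
      exact List.mem_range.2 (phiD_lt_of_lt_sub_card (List.mem_range.1 hk))
    rw [hprefix]
    conv => rhs; rw [← map_getD_range_length u]
    exact .map _ (List.sublist_of_subperm_of_pairwise (List.subperm_of_subset hlt.nodup hsubset)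
      (hlt.imp le_of_lt) List.pairwise_le_range)
  have hED := ED_append_le_of_sublist hsub (y.drop (m - c))
  rw [List.take_append_drop] at hED
  have hy : y.length = m := length_receivedWord D m (u ++ v)
  simp only [List.length_take, List.length_drop, hy] at hED
  omega

theorem naSuccessProb_receivedWord {β : Type} {q n m : ℕ}
    (Dec : ℕ → Fin n → PMF ((Fin q → ℕ) × ((Fin q → α) → β))) (D : Finset ℕ) (L : List α)
    {i : Fin n} (hRange : ∀ p ∈ (Dec m i).support, ∀ j, p.1 j < m) (b : β) :
    naSuccessProb Dec (receivedWord D m L) i b =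
      (Dec m i).toOuterMeasure {p | p.2 (fun j => L.getD (phiD D (p.1 j)) default) = b} := by
  rw [naSuccessProb, length_receivedWord]
  refine PMF.toOuterMeasure_apply_eq_of_inter_support_eq _ (Set.ext fun p => ?_)
  simp only [Set.mem_inter_iff, Set.mem_ofPred_eq]
  refine and_congr_left fun hp => ?_
  simp only [getD_receivedWord D L (hRange p hp _)]

end ReceivedWord

theorem ofReal_three_mul_div_two_le {ε : ℝ} (hε : 0 ≤ ε) {g b : ℝ≥0∞} (hgb : g + b = 1)
    (h : ENNReal.ofReal (1 / 2 + ε) ≤ g + ENNReal.ofReal (1 / 2 + ε / 4) * b) :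
    ENNReal.ofReal (3 * ε / 2) ≤ g := by
  have hg : g ≠ ⊤ := ne_top_of_le_ne_top ENNReal.one_ne_top (hgb ▸ le_self_add)
  have hb : b ≠ ⊤ := ne_top_of_le_ne_top ENNReal.one_ne_top (hgb ▸ le_add_self)
  have hgb' : g.toReal + b.toReal = 1 := by
    rw [← ENNReal.toReal_add hg hb, hgb, ENNReal.toReal_one]
  have hcb : ENNReal.ofReal (1 / 2 + ε / 4) * b ≠ ⊤ := ENNReal.mul_ne_top ENNReal.ofReal_ne_top hb
  have h' := (ENNReal.ofReal_le_iff_le_toReal (ENNReal.add_ne_top.2 ⟨hg, hcb⟩)).1 h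
  rw [ENNReal.toReal_add hg hcb, ENNReal.toReal_mul, ENNReal.toReal_ofReal (by positivity)] at h'
  refine ENNReal.ofReal_le_of_le_toReal ?_
  nlinarith [ENNReal.toReal_nonneg (a := g), ENNReal.toReal_nonneg (a := b),
    mul_nonneg hε (ENNReal.toReal_nonneg (a := g))]

namespace PMF

variable {α β : Type*}

theorem toOuterMeasure_le_one (p : PMF α) (s : Set α) : p.toOuterMeasure s ≤ 1 :=
  (p.toOuterMeasure.mono (Set.subset_univ s)).trans_eq
    ((toOuterMeasure_apply_eq_one_iff p _).2 (Set.subset_univ _))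

theorem toOuterMeasure_add_toOuterMeasure_compl (p : PMF α) (s : Set α) :
    p.toOuterMeasure s + p.toOuterMeasure sᶜ = 1 := by
  rw [toOuterMeasure_apply, toOuterMeasure_apply, ← ENNReal.tsum_add]
  simp_rw [Set.indicator_self_add_compl_apply]
  exact p.tsum_coe

theorem le_toOuterMeasure_bind_of_forall_mem_support {p : PMF α} {f : α → PMF β} {s : Set β}
    {c : ℝ≥0∞} (h : ∀ a ∈ p.support, c ≤ (f a).toOuterMeasure s) :
    c ≤ (p.bind f).toOuterMeasure s := by
  rw [toOuterMeasure_bind_apply]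
  calc c = ∑' a, p a * c := by rw [ENNReal.tsum_mul_right, p.tsum_coe, one_mul]
    _ ≤ _ := ENNReal.tsum_le_tsum fun a => ?_
  by_cases ha : a ∈ p.support
  · exact mul_le_mul_right (h a ha) _
  · simp [(p.apply_eq_zero_iff a).2 ha]

theorem tsum_mul_toOuterMeasure_comm (ν : PMF α) (μ : PMF β) (S : α → β → Prop) :
    ∑' t, μ t * ν.toOuterMeasure {a | S a t} = ∑' a, ν a * μ.toOuterMeasure {t | S a t} := by
  simp only [toOuterMeasure_apply, ← ENNReal.tsum_mul_left]
  rw [ENNReal.tsum_comm]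
  refine tsum_congr fun a => tsum_congr fun t => ?_
  simp only [Set.indicator_apply, Set.mem_ofPred_eq]
  split_ifs <;> simp [mul_comm]

theorem tsum_mul_le_add_mul_compl (ν : PMF α) {s : α → ℝ≥0∞} {G : Set α} {c : ℝ≥0∞}
    (hs : ∀ a, s a ≤ 1) (hc : ∀ a ∉ G, s a ≤ c) :
    ∑' a, ν a * s a ≤ ν.toOuterMeasure G + c * ν.toOuterMeasure Gᶜ := by
  rw [toOuterMeasure_apply, toOuterMeasure_apply, ← ENNReal.tsum_mul_left, ← ENNReal.tsum_add]
  refine ENNReal.tsum_le_tsum fun a => ?_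
  by_cases ha : a ∈ G
  · simpa [ha] using mul_le_of_le_one_right' (hs a)
  · simpa [ha, mul_comm] using mul_le_mul_right (hc a ha) (ν a)

theorem ofReal_le_toOuterMeasure_of_forall_success (ν : PMF α) (μ : PMF β) (S : α → β → Prop)
    {G : Set α} {ε : ℝ} (hε : 0 ≤ ε)
    (hsucc : ∀ t, ENNReal.ofReal (1 / 2 + ε) ≤ ν.toOuterMeasure {a | S a t})
    (hbad : ∀ a ∉ G, μ.toOuterMeasure {t | S a t} ≤ ENNReal.ofReal (1 / 2 + ε / 4)) :
    ENNReal.ofReal (3 * ε / 2) ≤ ν.toOuterMeasure G := by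
  refine ofReal_three_mul_div_two_le hε (ν.toOuterMeasure_add_toOuterMeasure_compl G) ?_
  calc ENNReal.ofReal (1 / 2 + ε) = ∑' t, μ t * ENNReal.ofReal (1 / 2 + ε) := by
        rw [ENNReal.tsum_mul_right, μ.tsum_coe, one_mul]
    _ ≤ ∑' t, μ t * ν.toOuterMeasure {a | S a t} :=
        ENNReal.tsum_le_tsum fun t => mul_le_mul_right (hsucc t) _
    _ = ∑' a, ν a * μ.toOuterMeasure {t | S a t} := ν.tsum_mul_toOuterMeasure_comm μ S
    _ ≤ _ := ν.tsum_mul_le_add_mul_compl (fun a => μ.toOuterMeasure_le_one _) hbad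

end PMF

theorem hitting_good_queries_general
    {q n m : ℕ} (δ ε : ℝ) (hε : ε ∈ Set.Ioc (0 : ℝ) (1 / 2))
    (C : (Fin n → Bool) → Fin m → Bool)
    (Dec : ℕ → Fin n → PMF ((Fin q → ℕ) × ((Fin q → Bool) → Bool)))
    (hDec : ∀ (x : Fin n → Bool) (y : List Bool),
      (ED (List.ofFn (C x)) y : ℝ) ≤ δ * (2 * m) →
      ∀ i : Fin n, ENNReal.ofReal (1 / 2 + ε) ≤ naSuccessProb Dec y i (x i))
    (hRange : ∀ (i : Fin n) (p : (Fin q → ℕ) × ((Fin q → Bool) → Bool)),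
      p ∈ (Dec m i).support → ∀ j, p.1 j < m)
    (P : PMF (Fin m → Bool))
    (𝒟 : PMF (Finset ℕ))
    (h𝒟 : ∀ D ∈ 𝒟.support, D ⊆ Finset.range (2 * m) ∧
      ((D.filter fun j => j < m).card : ℝ) ≤ δ * m ∧ D.card ≤ m) :
    ∀ i : Fin n,
      ENNReal.ofReal (3 * ε / 2) ≤
        ((𝒟.bind fun D => (Dec m i).map fun p => (D, p))).toOuterMeasure
          {t | GoodTup C P ε i fun j => phiD t.1 (t.2.1 j)} := by
  intro i
  refine PMF.le_toOuterMeasure_bind_of_forall_mem_support fun D hD => ?_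
  rw [PMF.toOuterMeasure_map_apply]
  refine (Dec m i).ofReal_le_toOuterMeasure_of_forall_success
    ((PMF.uniformOfFintype (Fin n → Bool)).bind fun x => P.map fun pad => (x, pad))
    (fun p t => p.2 (fun j => (List.ofFn (C t.1) ++ List.ofFn t.2).getD (phiD D (p.1 j)) false)
      = t.1 i) hε.1.le (fun t => ?_) (fun p hp => le_of_not_ge fun h => hp ⟨p.2, h⟩)
  set u := List.ofFn (C t.1)
  have hu : u.length = m := List.length_ofFn
  have hED : (ED u (receivedWord D m (u ++ List.ofFn t.2)) : ℝ) ≤ δ * (2 * m) := by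
    have hle : (ED u (receivedWord D m (u ++ List.ofFn t.2)) : ℝ) ≤
        2 * (D.filter fun j => j < m).card := by
      exact_mod_cast hu ▸ ED_receivedWord_append_le D u (List.ofFn t.2)
    linarith [(h𝒟 D hD).2.1]
  exact (hDec t.1 _ hED i).trans_eq (naSuccessProb_receivedWord Dec D _ (hRange i) _)

/-- **hitting lemma.** Let `C` be a `(q,δ,ε)` insdel LDC with a
non-adaptive decoder `Dec` (whose queries on words of length `m` lie in `[m]`), let the
augmented codeword append `m` padding bits distributed as `P` (independently of `x`),
and let `𝒟` be any distribution over deletion sets `D ⊆ [2m]` with `|D ∩ [m]| ≤ δm` and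
`|D| ≤ m`.  Then for every `i`, the probability over `D ∼ 𝒟` and over the query tuple
`Q` of `Dec(·, m, i)` that `Q^D` is good for `i` is at least `3ε/2`. -/
theorem hitting_good_queries
    {q n m : ℕ} (δ ε : ℝ) (hδ : δ ∈ Set.Icc (0 : ℝ) 1) (hε : ε ∈ Set.Ioc (0 : ℝ) (1 / 2))
    (C : (Fin n → Bool) → Fin m → Bool)
    (Dec : ℕ → Fin n → PMF ((Fin q → ℕ) × ((Fin q → Bool) → Bool)))
    (hDec : ∀ (x : Fin n → Bool) (y : List Bool),
      (ED (List.ofFn (C x)) y : ℝ) ≤ δ * (2 * m) →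
      ∀ i : Fin n, ENNReal.ofReal (1 / 2 + ε) ≤ naSuccessProb Dec y i (x i))
    (hRange : ∀ (i : Fin n) (p : (Fin q → ℕ) × ((Fin q → Bool) → Bool)),
      p ∈ (Dec m i).support → ∀ j, p.1 j < m)
    (P : PMF (Fin m → Bool))
    (𝒟 : PMF (Finset ℕ))
    (h𝒟 : ∀ D ∈ 𝒟.support, D ⊆ Finset.range (2 * m) ∧
      ((D.filter fun j => j < m).card : ℝ) ≤ δ * m ∧ D.card ≤ m) :
    ∀ i : Fin n,
      ENNReal.ofReal (3 * ε / 2) ≤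
        ((𝒟.bind fun D => (Dec m i).map fun p => (D, p))).toOuterMeasure
          {t | GoodTup C P ε i fun j => phiD t.1 (t.2.1 j)} :=
  hitting_good_queries_general δ ε hε C Dec hDec hRange P 𝒟 h𝒟
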